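/- arXiv:2103.16883 — 2 statements merged into one kernel-verified Lean document; each statement's English description precedes it below -/
import Mathlib

section
/- Let R be a commutative ring, H an R-Hopf algebra, and M a Hopf module over H (i.e. M is a left H-module and an H-comodule whose coaction map is a morphism of H-modules, H acting on itself by left multiplication). Then the map μ : H ⊗_R M^{coH} → M given by μ(h ⊗ m) = h·m, where M^{coH} denotes the coinvariants {m ∈ M | ρ(m) = 1 ⊗ m}, is an isomorphism of H-modules. -/
open TensorProduct

variable {R H M : Type} [CommRing R] [Ring H] [HopfAlgebra R H]
  [AddCommGroup M] [Module R M]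

/-- The coinvariants `M^{coH} = {m ∈ M : ρ m = 1 ⊗ m}` of a comodule `(M, ρ)`. -/
def hopfCoinvariants (ρ : M →ₗ[R] H ⊗[R] M) : Submodule R M where
  carrier := {m | ρ m = (1 : H) ⊗ₜ[R] m}
  add_mem' := by
    intro a b ha hb
    simp only [Set.mem_setOf_eq] at *
    rw [map_add, ha, hb, TensorProduct.tmul_add]
  zero_mem' := by simp [Set.mem_setOf_eq]
  smul_mem' := by
    intro c x hx
    simp only [Set.mem_setOf_eq] at *
    rw [map_smul, hx, TensorProduct.tmul_smul]

/-!
The inverse of `μ` is `m ↦ m₋₁ ⊗ P m₀`, where `P m = S(m₋₁) • m₀`. That `P` lands in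
the coinvariants comes from the antipode being anti-comultiplicative, `Δ (S h) = S h₂ ⊗ S h₁`,
itself a left-inverse-equals-right-inverse argument in the convolution monoid `Hom(H, H ⊗ H)`.
The antipode axiom gives `m₋₁ • P m₀ = m`, and for coinvariant `m` the compatibility
`ρ (h • m) = h₁ ⊗ h₂ • m` gives `P (h • m) = ε h • m`.
-/

open LinearMap WithConv
open Coalgebra (comul counit)
open HopfAlgebra (antipode mul_antipode_lTensor_comul mul_antipode_rTensor_comul)

namespace HopfAlgebra

variable {R A : Type*} [CommSemiring R] [Semiring A] [HopfAlgebra R A]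

local notation "𝑺" => antipode R (A := A)
local notation "𝑮" => map 𝑺 𝑺 ∘ₗ (TensorProduct.comm R A A : A ⊗[R] A →ₗ[R] A ⊗[R] A) ∘ₗ
  comul (R := R) (A := A)

lemma map_counit_comp_assoc_comm_comul {N P : Type*} [AddCommMonoid N] [Module R N]
    [AddCommMonoid P] [Module R P] (g : A ⊗[R] N →ₗ[R] P) :
    map (Algebra.linearMap R A ∘ₗ counit) g ∘ₗ (TensorProduct.assoc R A A N).toLinearMap ∘ₗ
        rTensor N ((TensorProduct.comm R A A).toLinearMap ∘ₗ comul) =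
      TensorProduct.mk R A P 1 ∘ₗ g := by
  ext a n
  have hs (s : A ⊗[R] A) :
      map (Algebra.linearMap R A ∘ₗ counit) g
          (TensorProduct.assoc R A A N (TensorProduct.comm R A A s ⊗ₜ n)) =
        map (Algebra.linearMap R A) (g ∘ₗ (TensorProduct.mk R A N).flip n)
          (TensorProduct.comm R A R (lTensor A counit s)) := by
    induction s using TensorProduct.induction_on with
    | zero => simp
    | tmul x y => simp
    | add s t hs ht => simp_all [add_tmul]
  simpa using hs (comul a)

/-- In Sweedler notation: `∑ S a₂ * a₃ ⊗ act (S a₁ ⊗ n) = 1 ⊗ act (S a ⊗ n)`. -/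
lemma antipode_mul_tmul_act_antipode {N : Type*} [AddCommMonoid N] [Module R N]
    (act : A ⊗[R] N →ₗ[R] N) :
    map (mul' R A) act ∘ₗ (tensorTensorTensorComm R A A A N).toLinearMap ∘ₗ
        rTensor (A ⊗[R] N) 𝑮 ∘ₗ (TensorProduct.assoc R A A N).toLinearMap ∘ₗ rTensor N comul =
      TensorProduct.mk R A N 1 ∘ₗ act ∘ₗ rTensor N 𝑺 := by
  simp only [coassoc_simps]
  rw [← rTensor_def, mul_antipode_rTensor_comul]
  exact map_counit_comp_assoc_comm_comul _

lemma comul_comp_antipode : comul ∘ₗ 𝑺 = 𝑮 := by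
  have hleft : toConv 𝑮 * toConv comul = 1 := by
    simp only [LinearMap.convMul_def, LinearMap.convOne_def, mul'_tensor]
    congr 1
    calc _ = (map (mul' R A) (mul' R A) ∘ₗ (tensorTensorTensorComm R A A A A).toLinearMap ∘ₗ
          rTensor (A ⊗[R] A) 𝑮 ∘ₗ (TensorProduct.assoc R A A A).toLinearMap ∘ₗ
            rTensor A comul) ∘ₗ comul := by
          simp only [coassoc_simps]
      _ = TensorProduct.mk R A A 1 ∘ₗ mul' R A ∘ₗ rTensor A 𝑺 ∘ₗ comul := by
          rw [antipode_mul_tmul_act_antipode, comp_assoc, comp_assoc]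
      _ = Algebra.linearMap R (A ⊗[R] A) ∘ₗ counit := by
          rw [mul_antipode_rTensor_comul]
          ext a
          simp [Algebra.TensorProduct.one_def, Algebra.algebraMap_eq_smul_one]
  exact congr(ofConv $((left_inv_eq_right_inv hleft comul_right_inv).symm))

end HopfAlgebra

section HopfModule

variable {R H M : Type*} [CommSemiring R] [Semiring H] [HopfAlgebra R H]
  [AddCommMonoid M] [Module R M] {act : H ⊗[R] M →ₗ[R] M} {ρ : M →ₗ[R] H ⊗[R] M}

variable (act ρ) in
noncomputable def coinvariantProj : M →ₗ[R] M := act ∘ₗ rTensor M (antipode R) ∘ₗ ρ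

lemma coaction_comp_coinvariantProj
    (hcoassoc : (TensorProduct.assoc R H H M).toLinearMap ∘ₗ rTensor M comul ∘ₗ ρ =
      lTensor H ρ ∘ₗ ρ)
    (hcompat : ρ ∘ₗ act =
      map (mul' R H) act ∘ₗ (tensorTensorTensorComm R H H H M).toLinearMap ∘ₗ map comul ρ) :
    ρ ∘ₗ coinvariantProj act ρ = mk R H M 1 ∘ₗ coinvariantProj act ρ := by
  calc ρ ∘ₗ act ∘ₗ rTensor M (antipode R) ∘ₗ ρ
      = map (mul' R H) act ∘ₗ (tensorTensorTensorComm R H H H M).toLinearMap ∘ₗ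
          rTensor (H ⊗[R] M) (comul ∘ₗ antipode R) ∘ₗ lTensor H ρ ∘ₗ ρ := by
        rw [← comp_assoc, hcompat]
        simp only [coassoc_simps]
    _ = (map (mul' R H) act ∘ₗ (tensorTensorTensorComm R H H H M).toLinearMap ∘ₗ
          rTensor (H ⊗[R] M)
            (map (antipode R) (antipode R) ∘ₗ (TensorProduct.comm R H H).toLinearMap ∘ₗ comul) ∘ₗ
          (TensorProduct.assoc R H H M).toLinearMap ∘ₗ rTensor M comul) ∘ₗ ρ := by
        rw [HopfAlgebra.comul_comp_antipode, ← hcoassoc]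
        simp only [comp_assoc]
    _ = mk R H M 1 ∘ₗ act ∘ₗ rTensor M (antipode R) ∘ₗ ρ := by
        rw [HopfAlgebra.antipode_mul_tmul_act_antipode]
        simp only [comp_assoc]

lemma act_comp_lTensor_coinvariantProj_comp_coaction
    (hone : ∀ m : M, act (1 ⊗ₜ m) = m)
    (hassoc : ∀ (h k : H) (m : M), act (h ⊗ₜ act (k ⊗ₜ m)) = act ((h * k) ⊗ₜ m))
    (hcounit : ∀ m : M, TensorProduct.lid R M (rTensor M counit (ρ m)) = m)
    (hcoassoc : (TensorProduct.assoc R H H M).toLinearMap ∘ₗ rTensor M comul ∘ₗ ρ =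
      lTensor H ρ ∘ₗ ρ) :
    act ∘ₗ lTensor H (coinvariantProj act ρ) ∘ₗ ρ = .id := by
  have hact : act ∘ₗ lTensor H (act ∘ₗ rTensor M (antipode R)) ∘ₗ
      (TensorProduct.assoc R H H M).toLinearMap =
        act ∘ₗ rTensor M (mul' R H ∘ₗ lTensor H (antipode R)) :=
    TensorProduct.ext_threefold fun h k m => by simp [hassoc]
  have hρ (m : M) : rTensor M counit (ρ m) = 1 ⊗ₜ m :=
    (TensorProduct.lid R M).eq_symm_apply.mpr (hcounit m)
  calc act ∘ₗ lTensor H (act ∘ₗ rTensor M (antipode R) ∘ₗ ρ) ∘ₗ ρ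
      = (act ∘ₗ lTensor H (act ∘ₗ rTensor M (antipode R)) ∘ₗ
          (TensorProduct.assoc R H H M).toLinearMap) ∘ₗ rTensor M comul ∘ₗ ρ := by
        rw [← comp_assoc ρ (rTensor M _) act, lTensor_comp, comp_assoc, ← hcoassoc]
        simp only [comp_assoc]
    _ = act ∘ₗ rTensor M (Algebra.linearMap R H) ∘ₗ rTensor M counit ∘ₗ ρ := by
        rw [hact, comp_assoc, ← comp_assoc _ _ (rTensor M _), ← rTensor_comp, comp_assoc,
          mul_antipode_lTensor_comul, rTensor_comp, comp_assoc]
    _ = .id := by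
        ext m
        simp [hρ, hone]

lemma coaction_comp_act_comp_flip
    (hcompat : ρ ∘ₗ act =
      map (mul' R H) act ∘ₗ (tensorTensorTensorComm R H H H M).toLinearMap ∘ₗ map comul ρ)
    {m : M} (hm : ρ m = 1 ⊗ₜ m) :
    ρ ∘ₗ act ∘ₗ (mk R H M).flip m = lTensor H (act ∘ₗ (mk R H M).flip m) ∘ₗ comul := by
  calc ρ ∘ₗ act ∘ₗ (mk R H M).flip m
      = (map (mul' R H) act ∘ₗ (tensorTensorTensorComm R H H H M).toLinearMap ∘ₗ
          (mk R (H ⊗[R] H) (H ⊗[R] M)).flip (1 ⊗ₜ m)) ∘ₗ comul := by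
        rw [← comp_assoc, hcompat]
        ext h
        simp [hm]
    _ = lTensor H (act ∘ₗ (mk R H M).flip m) ∘ₗ comul := by
        congr 1
        ext a b
        simp

lemma coinvariantProj_comp_act_comp_flip
    (hone : ∀ m : M, act (1 ⊗ₜ m) = m)
    (hassoc : ∀ (h k : H) (m : M), act (h ⊗ₜ act (k ⊗ₜ m)) = act ((h * k) ⊗ₜ m))
    (hcompat : ρ ∘ₗ act =
      map (mul' R H) act ∘ₗ (tensorTensorTensorComm R H H H M).toLinearMap ∘ₗ map comul ρ)
    {m : M} (hm : ρ m = 1 ⊗ₜ m) :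
    coinvariantProj act ρ ∘ₗ act ∘ₗ (mk R H M).flip m = toSpanSingleton R M m ∘ₗ counit := by
  calc act ∘ₗ rTensor M (antipode R) ∘ₗ ρ ∘ₗ act ∘ₗ (mk R H M).flip m
      = (act ∘ₗ (mk R H M).flip m) ∘ₗ mul' R H ∘ₗ rTensor H (antipode R) ∘ₗ comul := by
        rw [coaction_comp_act_comp_flip hcompat hm]
        simp only [← comp_assoc]
        congr 1
        ext a b
        simp [hassoc]
    _ = toSpanSingleton R M m ∘ₗ counit := by
        rw [mul_antipode_rTensor_comul]
        ext r
        simp [Algebra.algebraMap_eq_smul_one, hone]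

end HopfModule

lemma lTensor_codRestrict_coinvariantProj_coaction_act {act : H ⊗[R] M →ₗ[R] M}
    {ρ : M →ₗ[R] H ⊗[R] M} (hone : ∀ m : M, act (1 ⊗ₜ m) = m)
    (hassoc : ∀ (h k : H) (m : M), act (h ⊗ₜ act (k ⊗ₜ m)) = act ((h * k) ⊗ₜ m))
    (hcompat : ρ ∘ₗ act =
      map (mul' R H) act ∘ₗ (tensorTensorTensorComm R H H H M).toLinearMap ∘ₗ map comul ρ)
    (hP : ∀ m, coinvariantProj act ρ m ∈ hopfCoinvariants ρ) (h : H) (m : hopfCoinvariants ρ) :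
    lTensor H ((coinvariantProj act ρ).codRestrict _ hP) (ρ (act (h ⊗ₜ m))) = h ⊗ₜ m := by
  set P := (coinvariantProj act ρ).codRestrict _ hP
  have hPm : P ∘ₗ act ∘ₗ (mk R H M).flip m = toSpanSingleton R _ m ∘ₗ counit :=
    LinearMap.ext fun k => Subtype.ext
      congr($(coinvariantProj_comp_act_comp_flip hone hassoc hcompat m.2) k)
  calc lTensor H P (ρ (act (h ⊗ₜ m)))
      = lTensor H P (lTensor H (act ∘ₗ (mk R H M).flip m) (comul h)) :=
        congr(lTensor H P ($(coaction_comp_act_comp_flip hcompat m.2) h))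
    _ = lTensor H (toSpanSingleton R _ m) (lTensor H counit (comul h)) := by
        rw [← comp_apply (lTensor H P), ← lTensor_comp, hPm, lTensor_comp, comp_apply]
    _ = h ⊗ₜ m := by simp

/-- Fundamental theorem of Hopf modules: Let `H` be a Hopf algebra over a
commutative ring `R` and `M` a Hopf module over `H`: `M` is a left `H`-module (action
`act`, encoded by `smulM : H ⊗ M → M`), a left `H`-comodule (coaction `ρ`), and `ρ` is a
map of `H`-modules where `H ⊗ M` carries the action `h • (k ⊗ m) = Δ(h)(k ⊗ m)`.  Then
`μ : H ⊗_R M^{coH} → M`, `h ⊗ m ↦ h • m`, is an isomorphism (it is `H`-linear by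
construction and bijective). -/
theorem hopf_module_structure_theorem
    (smulM : H ⊗[R] M →ₗ[R] M)
    (hone : ∀ m : M, smulM ((1 : H) ⊗ₜ[R] m) = m)
    (hassoc : ∀ (h k : H) (m : M),
      smulM (h ⊗ₜ[R] smulM (k ⊗ₜ[R] m)) = smulM ((h * k) ⊗ₜ[R] m))
    (ρ : M →ₗ[R] H ⊗[R] M)
    (hcounit : ∀ m : M,
      (TensorProduct.lid R M)
        ((TensorProduct.map (Coalgebra.counit (R := R) (A := H)) LinearMap.id)
          (ρ m)) = m)
    (hcoassoc :
      (TensorProduct.assoc R H H M).toLinearMap.comp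
          ((TensorProduct.map (Coalgebra.comul (R := R) (A := H))
            LinearMap.id).comp ρ) =
        (TensorProduct.map LinearMap.id ρ).comp ρ)
    -- `ρ` is `H`-linear: ρ(h·m) = Δ(h)·ρ(m)
    (hcompat :
      ρ.comp smulM =
        (TensorProduct.map (LinearMap.mul' R H) smulM).comp
          ((TensorProduct.tensorTensorTensorComm R H H H M).toLinearMap.comp
            (TensorProduct.map (Coalgebra.comul (R := R) (A := H)) ρ))) :
    Function.Bijective
      (smulM.comp
        (TensorProduct.map LinearMap.id (hopfCoinvariants ρ).subtype)) := by
  have hP : ∀ m, coinvariantProj smulM ρ m ∈ hopfCoinvariants ρ := fun m =>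
    congr($(coaction_comp_coinvariantProj hcoassoc hcompat) m)
  set P := (coinvariantProj smulM ρ).codRestrict (hopfCoinvariants ρ) hP
  refine Function.bijective_iff_has_inverse.mpr ⟨lTensor H P ∘ₗ ρ, fun x => ?_, fun m => ?_⟩
  · suffices (lTensor H P ∘ₗ ρ) ∘ₗ smulM ∘ₗ lTensor H (hopfCoinvariants ρ).subtype = .id from
      congr($this x)
    exact TensorProduct.ext'
      (lTensor_codRestrict_coinvariantProj_coaction_act hone hassoc hcompat hP)
  · calc smulM (lTensor H (hopfCoinvariants ρ).subtype (lTensor H P (ρ m)))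
        = smulM (lTensor H (coinvariantProj smulM ρ) (ρ m)) := by
          rw [← comp_apply (lTensor H _), ← lTensor_comp, subtype_comp_codRestrict]
      _ = m := congr($(act_comp_lTensor_coinvariantProj_comp_coaction hone hassoc hcounit
          hcoassoc) m)
end

section
/- Let R be a commutative ring, A a commutative R-algebra, L an (R,A)-Lie–Rinehart algebra containing A as a Lie ideal with trivial bracket (i.e. 0 → A → L → ρ(L) → 0 exact), and let 1_L be the image of 1 ∈ A. Let M be an L-module (in the Lie–Rinehart sense) such that the action of 1_L ∈ L coincides with the action of 1 ∈ A (i.e. 1_L·m = m for all m ∈ M). Then M is a module over the quotient algebra D = U(L)/U(L)(i(1) − j(1)), and conversely every D-module arises this way; this correspondence is bijective. -/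
/-- An `(R,A)`-Lie–Rinehart algebra structure on `L`: an `A`-module `L` with an `R`-Lie
algebra structure and an anchor `ρ : L → Der_R(A)` which is an `A`-module map and a Lie
algebra map, satisfying the Leibniz rule `⁅x, a • y⁆ = a • ⁅x,y⁆ + ρ(x)(a) • y`. -/
structure LieRinehartStr (R A L : Type) [CommRing R] [CommRing A] [Algebra R A]
    [LieRing L] [Module R L] [Module A L] [IsScalarTower R A L] where
  ρ : L →ₗ[A] Derivation R A A
  map_lie : ∀ x y : L, ρ ⁅x, y⁆ = ⁅ρ x, ρ y⁆
  leibniz : ∀ (x y : L) (a : A), ⁅x, a • y⁆ = a • ⁅x, y⁆ + ρ x a • y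

/-- The universal enveloping algebra of an `(R,A)`-Lie–Rinehart algebra `L`, given by
its universal property: `U` is an `R`-algebra generated by `A` and `L` subject to
`j(a • x) = i(a) j(x)`, `j(x) i(a) − i(a) j(x) = i(ρ(x)(a))`, and
`j(x) j(y) − j(y) j(x) = j(⁅x,y⁆)`, universal among such. -/
structure LREnvelope {R A L : Type} [CommRing R] [CommRing A] [Algebra R A]
    [LieRing L] [Module R L] [Module A L] [IsScalarTower R A L]
    (LR : LieRinehartStr R A L) (U : Type) [Ring U] [Algebra R U] where
  i : A →ₐ[R] U
  j : L →ₗ[R] U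
  smul_rel : ∀ (a : A) (x : L), j (a • x) = i a * j x
  der_rel : ∀ (x : L) (a : A), j x * i a - i a * j x = i (LR.ρ x a)
  lie_rel : ∀ x y : L, j x * j y - j y * j x = j ⁅x, y⁆
  universal : ∀ (S : Type) [Ring S] [Algebra R S] (i' : A →ₐ[R] S) (j' : L →ₗ[R] S),
    (∀ (a : A) (x : L), j' (a • x) = i' a * j' x) →
    (∀ (x : L) (a : A), j' x * i' a - i' a * j' x = i' (LR.ρ x a)) →
    (∀ x y : L, j' x * j' y - j' y * j' x = j' ⁅x, y⁆) →
    ∃! φ : U →ₐ[R] S, φ.comp i = i' ∧ φ.toLinearMap.comp j = j'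

/-!
An `L`-module structure on `M`, together with its `A`-module structure, is precisely a pair
`(A → End M, L → End M)` satisfying the defining relations of `U(L)`, so the universal property
of the envelope extends it uniquely to `U(L) → End M`; the Picard condition `1_L · m = m` says
exactly that this extension kills `i(1) − j(1_L)`. Conversely, the images of `i` and `j` under
any algebra map out of `U(L)` satisfy the envelope relations, which are the `L`-module axioms,
and once `j(1_L)` acts as the identity, `j(ι a) = i(a) j(1_L)` forces the two `A`-actions to agree.
-/

namespace LREnvelope

variable {R A L U : Type} [CommRing R] [CommRing A] [Algebra R A]
    [LieRing L] [Module R L] [Module A L] [IsScalarTower R A L]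
    [Ring U] [Algebra R U] {LR : LieRinehartStr R A L} (env : LREnvelope LR U)

theorem existsUnique_algHom_toEnd {M : Type} [AddCommGroup M] [Module R M] [Module A M]
    [IsScalarTower R A M] (aL : L →ₗ[R] Module.End R M)
    (hder : ∀ (f : A) (l : L) (m : M), f • (aL l m) = aL l (f • m) - (LR.ρ l f) • m)
    (hsmul : ∀ (f : A) (l : L) (m : M), aL (f • l) m = f • (aL l m))
    (hlie : ∀ (l l' : L) (m : M), aL ⁅l, l'⁆ m = aL l (aL l' m) - aL l' (aL l m)) :
    ∃! φ : U →ₐ[R] Module.End R M,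
      (∀ (a : A) (m : M), φ (env.i a) m = a • m) ∧
      (∀ (l : L) (m : M), φ (env.j l) m = aL l m) := by
  have smul_rel (a : A) (x : L) : aL (a • x) = Algebra.lsmul R R M a * aL x :=
    LinearMap.ext (hsmul a x)
  have der_rel (x : L) (a : A) :
      aL x * Algebra.lsmul R R M a - Algebra.lsmul R R M a * aL x =
        Algebra.lsmul R R M (LR.ρ x a) :=
    LinearMap.ext fun m => by
      change aL x (a • m) - a • aL x m = LR.ρ x a • m
      rw [hder]
      abel
  have lie_rel (x y : L) : aL x * aL y - aL y * aL x = aL ⁅x, y⁆ :=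
    LinearMap.ext fun m => (hlie x y m).symm
  obtain ⟨φ, ⟨hφi, hφj⟩, hφ_unique⟩ :=
    env.universal _ (Algebra.lsmul R R M) aL smul_rel der_rel lie_rel
  refine ⟨φ, ⟨fun a m => ?_, fun l m => ?_⟩,
    fun ψ ⟨hψi, hψj⟩ => hφ_unique ψ ⟨?_, ?_⟩⟩
  · exact LinearMap.congr_fun (DFunLike.congr_fun hφi a) m
  · exact LinearMap.congr_fun (LinearMap.congr_fun hφj l) m
  · ext a m
    exact hψi a m
  · ext l m
    exact hψj l m

variable {S : Type} [Ring S] [Algebra R S] (ψ : U →ₐ[R] S)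

theorem map_i_one_sub_j_eq_zero_iff (x : L) : ψ (env.i 1 - env.j x) = 0 ↔ ψ (env.j x) = 1 := by
  rw [map_sub, map_one, map_one, sub_eq_zero, eq_comm]

theorem map_j_smul (a : A) (x : L) : ψ (env.j (a • x)) = ψ (env.i a) * ψ (env.j x) := by
  rw [env.smul_rel, map_mul]

theorem map_j_mul_map_i_sub (x : L) (a : A) :
    ψ (env.j x) * ψ (env.i a) - ψ (env.i a) * ψ (env.j x) = ψ (env.i (LR.ρ x a)) := by
  rw [← map_mul ψ, ← map_mul ψ, ← map_sub, env.der_rel]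

theorem map_j_mul_map_j_sub (x y : L) :
    ψ (env.j x) * ψ (env.j y) - ψ (env.j y) * ψ (env.j x) = ψ (env.j ⁅x, y⁆) := by
  rw [← map_mul ψ, ← map_mul ψ, ← map_sub, env.lie_rel]

theorem map_j_linearMap_apply (ι : A →ₗ[A] L) (a : A) :
    ψ (env.j (ι a)) = ψ (env.i a) * ψ (env.j (ι 1)) := by
  rw [← env.map_j_smul ψ, ← map_smul, smul_eq_mul, mul_one]

end LREnvelope

theorem picard_module_correspondence_general
    {R A L U M : Type} [CommRing R] [CommRing A] [Algebra R A]
    [LieRing L] [Module R L] [Module A L] [IsScalarTower R A L]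
    [Ring U] [Algebra R U]
    [AddCommGroup M] [Module R M] [Module A M] [IsScalarTower R A M]
    (LR : LieRinehartStr R A L) (env : LREnvelope LR U)
    (ι : A →ₗ[A] L)
    (aL : L →ₗ[R] Module.End R M)
    (haxiom1 : ∀ (f : A) (l : L) (m : M),
      f • (aL l m) = aL l (f • m) - (LR.ρ l f) • m)
    (haxiom2 : ∀ (f : A) (l : L) (m : M), aL (f • l) m = f • (aL l m))
    (haxiom3 : ∀ (l l' : L) (m : M),
      aL ⁅l, l'⁆ m = aL l (aL l' m) - aL l' (aL l m))
    (hpicard : ∀ m : M, aL (ι 1) m = m) :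
    (∃! φ : U →ₐ[R] Module.End R M,
      (∀ (a : A) (m : M), φ (env.i a) m = a • m) ∧
      (∀ (l : L) (m : M), φ (env.j l) m = aL l m) ∧
      φ (env.i 1 - env.j (ι 1)) = 0) ∧
    (∀ ψ : U →ₐ[R] Module.End R M, ψ (env.i 1 - env.j (ι 1)) = 0 →
      (∀ m : M, ψ (env.j (ι 1)) m = m) ∧
      (∀ (a : A) (m : M), ψ (env.j (ι a)) m = ψ (env.i a) m) ∧
      (∀ (f : A) (l : L) (m : M),
        ψ (env.i f) (ψ (env.j l) m) =
          ψ (env.j l) (ψ (env.i f) m) - ψ (env.i (LR.ρ l f)) m) ∧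
      (∀ (f : A) (l : L) (m : M),
        ψ (env.j (f • l)) m = ψ (env.i f) (ψ (env.j l) m)) ∧
      (∀ (l l' : L) (m : M),
        ψ (env.j ⁅l, l'⁆) m =
          ψ (env.j l) (ψ (env.j l') m) - ψ (env.j l') (ψ (env.j l) m))) := by
  obtain ⟨φ, ⟨hφi, hφj⟩, hφ_unique⟩ :=
    env.existsUnique_algHom_toEnd aL haxiom1 haxiom2 haxiom3
  have hφ_kill : φ (env.i 1 - env.j (ι 1)) = 0 :=
    (env.map_i_one_sub_j_eq_zero_iff φ _).2 (LinearMap.ext fun m => (hφj _ m).trans (hpicard m))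
  refine ⟨⟨φ, ⟨hφi, hφj, hφ_kill⟩, fun ψ hψ => hφ_unique ψ ⟨hψ.1, hψ.2.1⟩⟩,
    fun ψ hψ => ?_⟩
  have hψ_one : ψ (env.j (ι 1)) = 1 := (env.map_i_one_sub_j_eq_zero_iff ψ _).1 hψ
  refine ⟨fun m => by rw [hψ_one]; rfl, fun a m => ?_, fun f l m => ?_, fun f l m => ?_,
    fun l l' m => (LinearMap.congr_fun (env.map_j_mul_map_j_sub ψ l l') m).symm⟩
  · rw [env.map_j_linearMap_apply, hψ_one, mul_one]
  · have hder := LinearMap.congr_fun (env.map_j_mul_map_i_sub ψ l f) m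
    rw [LinearMap.sub_apply] at hder
    rw [← hder, Module.End.mul_apply, Module.End.mul_apply, sub_sub_cancel]
  · rw [env.map_j_smul]
    rfl

/-- Let `L` be an `(R,A)`-Lie–Rinehart algebra containing `A` as a Lie
ideal with trivial bracket (via an injective `A`-linear `ι : A → L` with
`range ι = ker ρ`), and let `1_L = ι(1)`.  A Picard `L`-module `M` (an `L`-module on
which `1_L` acts as the identity) is the same thing as a module over
`D = U(L)/U(L)(i(1) − j(1_L))`: the action extends uniquely to `φ : U(L) → End(M)`
killing `i(1) − j(1_L)`, and conversely any `ψ : U(L) → End(M)` killing `i(1) − j(1_L)`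
induces an `L`-module structure on `M` on which `1_L` acts as the identity and whose two
`A`-actions agree. -/
theorem picard_module_correspondence
    {R A L U M : Type} [CommRing R] [CommRing A] [Algebra R A]
    [LieRing L] [Module R L] [Module A L] [IsScalarTower R A L]
    [Ring U] [Algebra R U]
    [AddCommGroup M] [Module R M] [Module A M] [IsScalarTower R A M]
    (LR : LieRinehartStr R A L) (env : LREnvelope LR U)
    (ι : A →ₗ[A] L) (hιinj : Function.Injective ι)
    (hιbracket : ∀ a a' : A, ⁅ι a, ι a'⁆ = 0)
    (hιker : ∀ x : L, LR.ρ x = 0 ↔ x ∈ LinearMap.range ι)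
    (aL : L →ₗ[R] Module.End R M)
    (haxiom1 : ∀ (f : A) (l : L) (m : M),
      f • (aL l m) = aL l (f • m) - (LR.ρ l f) • m)
    (haxiom2 : ∀ (f : A) (l : L) (m : M), aL (f • l) m = f • (aL l m))
    (haxiom3 : ∀ (l l' : L) (m : M),
      aL ⁅l, l'⁆ m = aL l (aL l' m) - aL l' (aL l m))
    (hpicard : ∀ m : M, aL (ι 1) m = m) :
    (∃! φ : U →ₐ[R] Module.End R M,
      (∀ (a : A) (m : M), φ (env.i a) m = a • m) ∧
      (∀ (l : L) (m : M), φ (env.j l) m = aL l m) ∧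
      φ (env.i 1 - env.j (ι 1)) = 0) ∧
    (∀ ψ : U →ₐ[R] Module.End R M, ψ (env.i 1 - env.j (ι 1)) = 0 →
      (∀ m : M, ψ (env.j (ι 1)) m = m) ∧
      (∀ (a : A) (m : M), ψ (env.j (ι a)) m = ψ (env.i a) m) ∧
      (∀ (f : A) (l : L) (m : M),
        ψ (env.i f) (ψ (env.j l) m) =
          ψ (env.j l) (ψ (env.i f) m) - ψ (env.i (LR.ρ l f)) m) ∧
      (∀ (f : A) (l : L) (m : M),
        ψ (env.j (f • l)) m = ψ (env.i f) (ψ (env.j l) m)) ∧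
      (∀ (l l' : L) (m : M),
        ψ (env.j ⁅l, l'⁆) m =
          ψ (env.j l) (ψ (env.j l') m) - ψ (env.j l') (ψ (env.j l) m))) :=
  picard_module_correspondence_general LR env ι aL haxiom1 haxiom2 haxiom3 hpicard
end
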